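/- Let C be a monoidal category whose unit is an initial object, locally closed on the left, with finite limits, equipped with its canonical cosimplicial object O and nerve functor N. For any object X of C and any m-simplex x : O[m] → X of N(X), there is an isomorphism of simplicial sets N(X/x) ≅ N(X)/x, natural in x over the category of elements of N(X). -/

import Mathlib

/-! An `n`-simplex of `N(X/x)` is a map `O[n] ⟶ X/x`, that is, by the adjunction, a map
`O[m] ⋆ O[n] ⟶ X` under `O[m]`; through `O[m] ⋆ O[n] ≅ O[m+1+n]` this is an
`(m+1+n)`-simplex of `N(X)` whose initial face is `x`, which is exactly an `n`-simplex of
`N(X)/x`. Naturality in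
`n` and in `x` comes from the compatibility of the join isomorphisms with the simplicial
operators acting on either factor. -/

open CategoryTheory Opposite

namespace ThmA

/-! ### Weak homotopy equivalences of simplicial sets -/

/-- A map of topological spaces is a homotopy equivalence. -/
def TopIsHEquiv {X Y : TopCat} (f : X ⟶ Y) : Prop :=
  ∃ g : Y ⟶ X, ContinuousMap.Homotopic (f ≫ g).hom (TopCat.Hom.hom (𝟙 X)) ∧ ContinuousMap.Homotopic (g ≫ f).hom (TopCat.Hom.hom (𝟙 Y))

/-- A morphism of simplicial sets is a weak homotopy equivalence if its topological
realization is a homotopy equivalence. -/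
noncomputable def IsWeakEquiv {X Y : SSet} (f : X ⟶ Y) : Prop := TopIsHEquiv (SSet.toTop.map f)

/-- The terminal simplicial set (a constant presheaf with point value). -/
def sTerminal : SSet := (Functor.const _).obj PUnit

def toTerminal (X : SSet) : X ⟶ sTerminal where
  app _ := TypeCat.ofHom (fun _ => PUnit.unit)
  naturality _ _ _ := rfl

/-- A simplicial set is weakly contractible if the map to the terminal simplicial set is a
weak homotopy equivalence. -/
noncomputable def IsWeaklyContractible (X : SSet) : Prop := IsWeakEquiv (toTerminal X)

/-! ### Joins of simplices -/

def joinFnGen {a b c d : ℕ} (f : Fin (a + 1) → Fin (b + 1)) (g : Fin (c + 1) → Fin (d + 1)) :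
    Fin (a + 1 + c + 1) → Fin (b + 1 + d + 1) := fun k =>
  if h : (k : ℕ) < a + 1 then
    ⟨(f ⟨(k : ℕ), h⟩ : Fin (b + 1)), by have := (f ⟨(k : ℕ), h⟩).isLt; omega⟩
  else
    ⟨b + 1 + ((g ⟨(k : ℕ) - (a + 1), by have := k.isLt; omega⟩ : Fin (d + 1)) : ℕ), by
      have := (g ⟨(k : ℕ) - (a + 1), by have := k.isLt; omega⟩).isLt; omega⟩

theorem joinFnGen_val_lt {a b c d : ℕ} (f : Fin (a + 1) → Fin (b + 1))
    (g : Fin (c + 1) → Fin (d + 1)) (k : Fin (a + 1 + c + 1)) (h : (k : ℕ) < a + 1)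
    (j : Fin (a + 1)) (hj : (j : ℕ) = (k : ℕ)) :
    ((joinFnGen f g k : Fin (b + 1 + d + 1)) : ℕ) = ((f j : Fin (b + 1)) : ℕ) := by
  dsimp [joinFnGen]
  rw [dif_pos h]
  show ((f ⟨(k : ℕ), h⟩ : Fin (b + 1)) : ℕ) = _
  rw [show (⟨(k : ℕ), h⟩ : Fin (a + 1)) = j from Fin.ext hj.symm]

theorem joinFnGen_val_ge {a b c d : ℕ} (f : Fin (a + 1) → Fin (b + 1))
    (g : Fin (c + 1) → Fin (d + 1)) (k : Fin (a + 1 + c + 1)) (h : ¬ (k : ℕ) < a + 1)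
    (j : Fin (c + 1)) (hj : (j : ℕ) = (k : ℕ) - (a + 1)) :
    ((joinFnGen f g k : Fin (b + 1 + d + 1)) : ℕ) = b + 1 + ((g j : Fin (d + 1)) : ℕ) := by
  dsimp [joinFnGen]
  rw [dif_neg h]
  show b + 1 + ((g ⟨(k : ℕ) - (a + 1), by have := k.isLt; omega⟩ : Fin (d + 1)) : ℕ) = _
  rw [show (⟨(k : ℕ) - (a + 1), by have := k.isLt; omega⟩ : Fin (c + 1)) = j from Fin.ext hj.symm]

theorem joinFnGen_monotone {a b c d : ℕ} (f : Fin (a + 1) →o Fin (b + 1))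
    (g : Fin (c + 1) →o Fin (d + 1)) : Monotone (joinFnGen f g) := by
  intro k l hkl
  have hk := k.isLt
  have hl := l.isLt
  have hkl' : (k : ℕ) ≤ (l : ℕ) := hkl
  dsimp [joinFnGen]
  split_ifs with h1 h2 h2
  · exact f.monotone (show (⟨(k : ℕ), h1⟩ : Fin (a + 1)) ≤ ⟨(l : ℕ), h2⟩ from hkl')
  · have := (f ⟨(k : ℕ), h1⟩).isLt
    simp only [Fin.mk_le_mk]
    omega
  · omega
  · simp only [Fin.mk_le_mk]
    have h5 : ((g ⟨(k : ℕ) - (a + 1), by omega⟩ : Fin (d + 1)) : ℕ)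
        ≤ ((g ⟨(l : ℕ) - (a + 1), by omega⟩ : Fin (d + 1)) : ℕ) :=
      g.monotone (by simp only [Fin.mk_le_mk]; omega)
    omega

def joinObj (x y : SimplexCategory) : SimplexCategory :=
  SimplexCategory.mk (x.len + 1 + y.len)

def joinHom {x x' y y' : SimplexCategory} (f : x ⟶ x') (g : y ⟶ y') :
    joinObj x y ⟶ joinObj x' y' :=
  SimplexCategory.Hom.mk ⟨joinFnGen f.toOrderHom g.toOrderHom,
    joinFnGen_monotone f.toOrderHom g.toOrderHom⟩

theorem joinHom_id (x y : SimplexCategory) : joinHom (𝟙 x) (𝟙 y) = 𝟙 (joinObj x y) := by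
  apply SimplexCategory.Hom.ext
  apply OrderHom.ext
  funext k
  apply Fin.ext
  have hk : (k : ℕ) < x.len + 1 + y.len + 1 := k.isLt
  show ((joinFnGen (SimplexCategory.Hom.toOrderHom (𝟙 x)) (SimplexCategory.Hom.toOrderHom (𝟙 y))
      k : Fin _) : ℕ) = (k : ℕ)
  by_cases h : (k : ℕ) < x.len + 1
  · rw [joinFnGen_val_lt _ _ _ h ⟨(k : ℕ), h⟩ rfl]
    rfl
  · rw [joinFnGen_val_ge _ _ _ h ⟨(k : ℕ) - (x.len + 1), by omega⟩ rfl]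
    show x.len + 1 + ((k : ℕ) - (x.len + 1)) = (k : ℕ)
    omega

theorem joinHom_comp {x x' x'' y y' y'' : SimplexCategory}
    (f : x ⟶ x') (f' : x' ⟶ x'') (g : y ⟶ y') (g' : y' ⟶ y'') :
    joinHom (f ≫ f') (g ≫ g') = joinHom f g ≫ joinHom f' g' := by
  apply SimplexCategory.Hom.ext
  apply OrderHom.ext
  funext k
  apply Fin.ext
  show ((joinFnGen (f ≫ f').toOrderHom (g ≫ g').toOrderHom k : Fin _) : ℕ)
      = ((joinFnGen f'.toOrderHom g'.toOrderHom
          (joinFnGen f.toOrderHom g.toOrderHom k) : Fin _) : ℕ)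
  have hk : (k : ℕ) < x.len + 1 + y.len + 1 := k.isLt
  by_cases h1 : (k : ℕ) < x.len + 1
  · have h2 : ((joinFnGen f.toOrderHom g.toOrderHom k : Fin (x'.len + 1 + y'.len + 1)) : ℕ)
        < x'.len + 1 := by
      rw [joinFnGen_val_lt _ _ _ h1 ⟨(k : ℕ), h1⟩ rfl]
      exact (f.toOrderHom ⟨(k : ℕ), h1⟩).isLt
    rw [joinFnGen_val_lt _ _ _ h1 ⟨(k : ℕ), h1⟩ rfl,
      joinFnGen_val_lt _ _ _ h2 (f.toOrderHom ⟨(k : ℕ), h1⟩)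
        (by rw [joinFnGen_val_lt _ _ _ h1 ⟨(k : ℕ), h1⟩ rfl])]
    rfl
  · have h2 : ¬ ((joinFnGen f.toOrderHom g.toOrderHom k : Fin (x'.len + 1 + y'.len + 1)) : ℕ)
        < x'.len + 1 := by
      rw [joinFnGen_val_ge _ _ _ h1 ⟨(k : ℕ) - (x.len + 1), by omega⟩ rfl]
      omega
    rw [joinFnGen_val_ge _ _ _ h1 ⟨(k : ℕ) - (x.len + 1), by omega⟩ rfl,
      joinFnGen_val_ge _ _ _ h2 (g.toOrderHom ⟨(k : ℕ) - (x.len + 1), by omega⟩)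
        (by rw [joinFnGen_val_ge _ _ _ h1 ⟨(k : ℕ) - (x.len + 1), by omega⟩ rfl]; omega)]
    rfl

theorem joinHom_id_comp (x : SimplexCategory) {y y' y'' : SimplexCategory}
    (g : y ⟶ y') (g' : y' ⟶ y'') :
    joinHom (𝟙 x) (g ≫ g') = joinHom (𝟙 x) g ≫ joinHom (𝟙 x) g' := by
  rw [← joinHom_comp, Category.comp_id]

theorem joinHom_comp_id {x x' x'' : SimplexCategory} (f : x ⟶ x') (f' : x' ⟶ x'')
    (y : SimplexCategory) :
    joinHom (f ≫ f') (𝟙 y) = joinHom f (𝟙 y) ≫ joinHom f' (𝟙 y) := by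
  rw [← joinHom_comp, Category.comp_id]

theorem joinHom_comm {x x' y y' : SimplexCategory} (f : x ⟶ x') (g : y ⟶ y') :
    joinHom f (𝟙 y) ≫ joinHom (𝟙 x') g = joinHom (𝟙 x) g ≫ joinHom f (𝟙 y') := by
  rw [← joinHom_comp, ← joinHom_comp]
  simp

/-- The inclusion of the initial factor of the join. -/
def incl₁ (x y : SimplexCategory) : x ⟶ joinObj x y :=
  SimplexCategory.Hom.mk ⟨fun k => ⟨(k : ℕ), by
      have := k.isLt
      show (k : ℕ) < x.len + 1 + y.len + 1
      omega⟩,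
    fun _ _ h => h⟩

/-- The inclusion of the terminal factor of the join. -/
def incl₂ (x y : SimplexCategory) : y ⟶ joinObj x y :=
  SimplexCategory.Hom.mk ⟨fun k => ⟨x.len + 1 + (k : ℕ), by
      have := k.isLt
      show x.len + 1 + (k : ℕ) < x.len + 1 + y.len + 1
      omega⟩,
    fun _ _ h => Nat.add_le_add_left h _⟩

theorem incl₁_natural {x x' y y' : SimplexCategory} (f : x ⟶ x') (g : y ⟶ y') :
    incl₁ x y ≫ joinHom f g = f ≫ incl₁ x' y' := by
  apply SimplexCategory.Hom.ext
  apply OrderHom.ext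
  funext k
  apply Fin.ext
  have h1 : (((incl₁ x y).toOrderHom k : Fin ((joinObj x y).len + 1)) : ℕ) < x.len + 1 := k.isLt
  show ((joinFnGen f.toOrderHom g.toOrderHom ((incl₁ x y).toOrderHom k) : Fin _) : ℕ) = _
  rw [joinFnGen_val_lt _ _ _ h1 k rfl]
  rfl

theorem incl₂_natural {x x' y y' : SimplexCategory} (f : x ⟶ x') (g : y ⟶ y') :
    incl₂ x y ≫ joinHom f g = g ≫ incl₂ x' y' := by
  apply SimplexCategory.Hom.ext
  apply OrderHom.ext
  funext k
  apply Fin.ext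
  have h1 : ¬ (((incl₂ x y).toOrderHom k : Fin ((joinObj x y).len + 1)) : ℕ) < x.len + 1 := by
    show ¬ x.len + 1 + (k : ℕ) < x.len + 1
    omega
  show ((joinFnGen f.toOrderHom g.toOrderHom ((incl₂ x y).toOrderHom k) : Fin _) : ℕ) = _
  rw [joinFnGen_val_ge _ _ _ h1 k
    (by show (k : ℕ) = x.len + 1 + (k : ℕ) - (x.len + 1); omega)]
  rfl

/-! ### Slices of simplicial sets -/

/-- The slice `X/z` of `X` under an `m`-simplex `z` of `Z` (relative to `g : X ⟶ Z`):
its `n`-simplices are pairs `(x ∈ X_n, z' ∈ Z_{m+1+n})` with `z'_{0,…,m} = z` and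
`z'_{m+1,…,m+1+n} = g(x)`. -/
def Coslice {X Z : SSet} (g : X ⟶ Z) {m : ℕ} (z : Z.obj (op (SimplexCategory.mk m))) :
    SSet where
  obj k := {p : X.obj k × Z.obj (op (joinObj (SimplexCategory.mk m) k.unop)) //
    Z.map (incl₁ (SimplexCategory.mk m) k.unop).op p.2 = z ∧
    Z.map (incl₂ (SimplexCategory.mk m) k.unop).op p.2 = g.app k p.1}
  map {k k'} φ := TypeCat.ofHom fun p =>
    ⟨(X.map φ p.1.1, Z.map (joinHom (𝟙 (SimplexCategory.mk m)) φ.unop).op p.1.2), by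
      constructor
      · rw [← FunctorToTypes.map_comp_apply, ← op_comp, incl₁_natural, Category.id_comp]
        exact p.2.1
      · rw [← FunctorToTypes.map_comp_apply, ← op_comp, incl₂_natural, op_comp,
          FunctorToTypes.map_comp_apply, Quiver.Hom.op_unop, p.2.2]
        exact (FunctorToTypes.naturality g φ _).symm⟩
  map_id k := by
    ext p : 3
    apply Subtype.ext
    dsimp
    rw [joinHom_id, op_id]
    simp
  map_comp {k k' k''} φ ψ := by
    ext p : 3
    apply Subtype.ext
    dsimp
    rw [joinHom_id_comp, op_comp]
    simp [FunctorToTypes.map_comp_apply]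

/-- The morphism `X/z ⟶ Y/z` induced by a morphism `f` over `Z`. -/
def cosliceMap {X Y Z : SSet} {g : X ⟶ Z} {h : Y ⟶ Z} (f : X ⟶ Y) (w : f ≫ h = g)
    {m : ℕ} (z : Z.obj (op (SimplexCategory.mk m))) : Coslice g z ⟶ Coslice h z where
  app k := TypeCat.ofHom fun p => ⟨(f.app k p.1.1, p.1.2), p.2.1, by
    dsimp
    rw [p.2.2]
    exact (congrArg (fun t : X ⟶ Z => t.app k p.1.1) w).symm⟩
  naturality {k k'} φ := by
    ext p : 3
    apply Subtype.ext
    dsimp [Coslice]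
    exact Prod.ext (FunctorToTypes.naturality f φ _) rfl

/-- The morphism `X/z ⟶ X/(z·φ)` induced by `φ : [m'] ⟶ [m]` (functoriality of the slice in the
simplex). For `φ` the last-vertex map `[0] ⟶ [m]` this is the map
`(x, z') ↦ (x, z'_{m,…,m+1+n})`. -/
def cosliceRestrict {X Z : SSet} (g : X ⟶ Z) {m' m : ℕ}
    (φ : SimplexCategory.mk m' ⟶ SimplexCategory.mk m)
    (z : Z.obj (op (SimplexCategory.mk m))) :
    Coslice g z ⟶ Coslice g (Z.map φ.op z) where
  app k := TypeCat.ofHom fun p => ⟨(p.1.1, Z.map (joinHom φ (𝟙 k.unop)).op p.1.2), by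
    constructor
    · rw [← FunctorToTypes.map_comp_apply, ← op_comp, incl₁_natural, op_comp,
        FunctorToTypes.map_comp_apply, p.2.1]
    · rw [← FunctorToTypes.map_comp_apply, ← op_comp, incl₂_natural, Category.id_comp, p.2.2]⟩
  naturality {k k'} ψ := by
    ext p : 3
    apply Subtype.ext
    dsimp [Coslice]
    refine Prod.ext rfl ?_
    show Z.map (joinHom φ (𝟙 k'.unop)).op (Z.map (joinHom (𝟙 _) ψ.unop).op p.1.2)
      = Z.map (joinHom (𝟙 _) ψ.unop).op (Z.map (joinHom φ (𝟙 k.unop)).op p.1.2)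
    rw [← FunctorToTypes.map_comp_apply, ← FunctorToTypes.map_comp_apply, ← op_comp, ← op_comp,
      joinHom_comm]

/-- The slice `X\z` of `X` over an `n`-simplex `z` of `Z` (relative to `g : X ⟶ Z`):
its `m`-simplices are pairs `(x ∈ X_m, z' ∈ Z_{m+1+n})` with `z'_{0,…,m} = g(x)` and
`z'_{m+1,…,m+1+n} = z`. -/
def Overslice {X Z : SSet} (g : X ⟶ Z) {n : ℕ} (z : Z.obj (op (SimplexCategory.mk n))) :
    SSet where
  obj k := {p : X.obj k × Z.obj (op (joinObj k.unop (SimplexCategory.mk n))) //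
    Z.map (incl₁ k.unop (SimplexCategory.mk n)).op p.2 = g.app k p.1 ∧
    Z.map (incl₂ k.unop (SimplexCategory.mk n)).op p.2 = z}
  map {k k'} φ := TypeCat.ofHom fun p =>
    ⟨(X.map φ p.1.1, Z.map (joinHom φ.unop (𝟙 (SimplexCategory.mk n))).op p.1.2), by
      constructor
      · rw [← FunctorToTypes.map_comp_apply, ← op_comp, incl₁_natural, op_comp,
          FunctorToTypes.map_comp_apply, Quiver.Hom.op_unop, p.2.1]
        exact (FunctorToTypes.naturality g φ _).symm
      · rw [← FunctorToTypes.map_comp_apply, ← op_comp, incl₂_natural, Category.id_comp]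
        exact p.2.2⟩
  map_id k := by
    ext p : 3
    apply Subtype.ext
    dsimp
    rw [joinHom_id, op_id]
    simp
  map_comp {k k' k''} φ ψ := by
    ext p : 3
    apply Subtype.ext
    dsimp
    rw [joinHom_comp_id, op_comp]
    simp [FunctorToTypes.map_comp_apply]

/-- The morphism `X\z ⟶ Y\z` induced by a morphism `f` over `Z`. -/
def oversliceMap {X Y Z : SSet} {g : X ⟶ Z} {h : Y ⟶ Z} (f : X ⟶ Y) (w : f ≫ h = g)
    {n : ℕ} (z : Z.obj (op (SimplexCategory.mk n))) : Overslice g z ⟶ Overslice h z where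
  app k := TypeCat.ofHom fun p => ⟨(f.app k p.1.1, p.1.2), by
    dsimp
    rw [p.2.1]
    exact (congrArg (fun t : X ⟶ Z => t.app k p.1.1) w).symm, p.2.2⟩
  naturality {k k'} φ := by
    ext p : 3
    apply Subtype.ext
    dsimp [Overslice]
    exact Prod.ext (FunctorToTypes.naturality f φ _) rfl

/-! ### Statement 7: comparison of slices with nerve slices in a locally left closed monoidal
category whose unit is an initial object. -/

section Monoidal

open MonoidalCategory Limits

universe u

variable {C : Type u} [Category.{0} C] [MonoidalCategory C]

/-- When the monoidal unit is an initial object `∅`, the canonical morphism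
`ι₁ : X ⟶ X ⋆ Y`. -/
def iota1 (hI : IsInitial (𝟙_ C)) (X Y : C) : X ⟶ X ⊗ Y :=
  (ρ_ X).inv ≫ (X ◁ hI.to Y)

theorem iota1_natural (hI : IsInitial (𝟙_ C)) {X X' : C} (f : X ⟶ X') (Y : C) :
    iota1 hI X Y ≫ (f ▷ Y) = f ≫ iota1 hI X' Y := by
  dsimp [iota1]
  rw [Category.assoc, whisker_exchange, ← Category.assoc, ← rightUnitor_inv_naturality,
    Category.assoc]

/-- The functor `Y ↦ (X ⋆ Y, ι₁)` from `C` to the under-category `X/C`. -/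
def underJoin (hI : IsInitial (𝟙_ C)) (T : C) : C ⥤ Under T where
  obj Y := Under.mk (iota1 hI T Y)
  map {Y Y'} f := Under.homMk (T ◁ f) (by
    dsimp [iota1]
    rw [Category.assoc, ← MonoidalCategory.whiskerLeft_comp]
    congr 2
    exact hI.hom_ext _ _)

/-- The nerve associated to a cosimplicial object `O`: `N(X)_n = Hom_C(O[n], X)`. -/
def cnerve (O : SimplexCategory ⥤ C) : C ⥤ SSet :=
  yoneda ⋙ (Functor.whiskeringLeft _ _ _).obj O.op

section

variable (hI : IsInitial (𝟙_ C)) (slice : ∀ T : C, Under T ⥤ C)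
  (adj : ∀ T : C, underJoin hI T ⊣ slice T) (O : SimplexCategory ⥤ C)

/-- The functoriality of slices in the simplex, `Z/x ⟶ Z/(x·φ)`, defined from the
adjunctions (it is the mate of the evident square). -/
def sliceMapC {m m' : ℕ} (φ : SimplexCategory.mk m' ⟶ SimplexCategory.mk m)
    {X : C} (x : O.obj (SimplexCategory.mk m) ⟶ X) :
    (slice (O.obj (SimplexCategory.mk m))).obj (Under.mk x) ⟶
      (slice (O.obj (SimplexCategory.mk m'))).obj (Under.mk (O.map φ ≫ x)) :=
  ((adj (O.obj (SimplexCategory.mk m'))).homEquiv _ _)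
    (Under.homMk
      ((O.map φ ▷ ((slice (O.obj (SimplexCategory.mk m))).obj (Under.mk x))) ≫
        ((adj (O.obj (SimplexCategory.mk m))).counit.app (Under.mk x)).right)
      (by
        have hc : iota1 hI (O.obj (SimplexCategory.mk m))
              ((slice (O.obj (SimplexCategory.mk m))).obj (Under.mk x)) ≫
              ((adj (O.obj (SimplexCategory.mk m))).counit.app (Under.mk x)).right = x := by
          simpa [underJoin] using
            Under.w ((adj (O.obj (SimplexCategory.mk m))).counit.app (Under.mk x))
        dsimp [underJoin]
        rw [← Category.assoc, iota1_natural, Category.assoc, hc]))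

theorem Coslice.ext_snd {Z : SSet} {m : ℕ} {z : Z.obj (op (SimplexCategory.mk m))}
    {k : SimplexCategoryᵒᵖ} {p q : (Coslice (𝟙 Z) z).obj k} (h : p.1.2 = q.1.2) : p = q :=
  Subtype.ext (Prod.ext (p.2.2.symm.trans (h ▸ q.2.2)) h)

def cosliceIdEquiv (Z : SSet) {m : ℕ} (z : Z.obj (op (SimplexCategory.mk m)))
    (k : SimplexCategoryᵒᵖ) :
    {w : Z.obj (op (joinObj (SimplexCategory.mk m) k.unop)) //
      Z.map (incl₁ (SimplexCategory.mk m) k.unop).op w = z} ≃ (Coslice (𝟙 Z) z).obj k where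
  toFun w := ⟨(Z.map (incl₂ (SimplexCategory.mk m) k.unop).op w.1, w.1), w.2, rfl⟩
  invFun p := ⟨p.1.2, p.2.1⟩
  left_inv _ := rfl
  right_inv _ := Coslice.ext_snd rfl

def homSliceEquiv {T X : C} (x : T ⟶ X) (Y : C) :
    (Y ⟶ (slice T).obj (Under.mk x)) ≃ {g : T ⊗ Y ⟶ X // iota1 hI T Y ≫ g = x} :=
  ((adj T).homEquiv Y (Under.mk x)).symm.trans
    { toFun u := ⟨u.right, by simpa [underJoin] using Under.w u⟩
      invFun g := Under.homMk g.1 g.2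
      left_inv _ := rfl
      right_inv _ := rfl }

theorem homSliceEquiv_coe {T X Y : C} (x : T ⟶ X) (f : Y ⟶ (slice T).obj (Under.mk x)) :
    (homSliceEquiv hI slice adj x Y f).1 = (((adj T).homEquiv Y (Under.mk x)).symm f).right :=
  rfl

theorem homSliceEquiv_comp {T X Y Y' : C} (x : T ⟶ X) (f' : Y' ⟶ Y)
    (f : Y ⟶ (slice T).obj (Under.mk x)) :
    (homSliceEquiv hI slice adj x Y' (f' ≫ f)).1 =
      (T ◁ f') ≫ (homSliceEquiv hI slice adj x Y f).1 := by
  rw [homSliceEquiv_coe, homSliceEquiv_coe, Adjunction.homEquiv_naturality_left_symm]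
  rfl

theorem homSliceEquiv_comp_sliceMapC {m m' : ℕ}
    (φ : SimplexCategory.mk m' ⟶ SimplexCategory.mk m) {X Y : C}
    (x : O.obj (SimplexCategory.mk m) ⟶ X)
    (f : Y ⟶ (slice (O.obj (SimplexCategory.mk m))).obj (Under.mk x)) :
    (homSliceEquiv hI slice adj (O.map φ ≫ x) Y (f ≫ sliceMapC hI slice adj O φ x)).1 =
      (O.map φ ▷ Y) ≫ (homSliceEquiv hI slice adj x Y f).1 := by
  rw [homSliceEquiv_coe, homSliceEquiv_coe, sliceMapC, Adjunction.homEquiv_naturality_left_symm,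
    Equiv.symm_apply_apply, Under.comp_right, Adjunction.homEquiv_counit, Under.comp_right]
  exact whisker_exchange_assoc _ _ _

section JoinCompatible

variable (jiso : ∀ m n : ℕ, O.obj (SimplexCategory.mk m) ⊗ O.obj (SimplexCategory.mk n)
      ≅ O.obj (joinObj (SimplexCategory.mk m) (SimplexCategory.mk n)))

def nerveSliceEquiv
    (hj₁ : ∀ m n : ℕ, iota1 hI (O.obj (SimplexCategory.mk m)) (O.obj (SimplexCategory.mk n))
        ≫ (jiso m n).hom
      = O.map (incl₁ (SimplexCategory.mk m) (SimplexCategory.mk n)))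
    {X : C} {m : ℕ} (x : O.obj (SimplexCategory.mk m) ⟶ X) (k : SimplexCategoryᵒᵖ) :
    ((cnerve O).obj ((slice (O.obj (SimplexCategory.mk m))).obj (Under.mk x))).obj k ≃
      (Coslice (𝟙 ((cnerve O).obj X))
        (show ((cnerve O).obj X).obj (op (SimplexCategory.mk m)) from x)).obj k :=
  (homSliceEquiv hI slice adj x (O.obj k.unop)).trans <|
    ((jiso m k.unop.len).homFromEquiv.subtypeEquiv fun g => by
      change _ ↔ O.map (incl₁ _ _) ≫ (jiso m k.unop.len).inv ≫ g = x
      rw [← hj₁, Category.assoc, Iso.hom_inv_id_assoc]).trans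
    (cosliceIdEquiv ((cnerve O).obj X) x k)

theorem nerveSliceEquiv_snd
    (hj₁ : ∀ m n : ℕ, iota1 hI (O.obj (SimplexCategory.mk m)) (O.obj (SimplexCategory.mk n))
        ≫ (jiso m n).hom
      = O.map (incl₁ (SimplexCategory.mk m) (SimplexCategory.mk n)))
    {X : C} {m : ℕ} (x : O.obj (SimplexCategory.mk m) ⟶ X) {k : SimplexCategoryᵒᵖ}
    (f : O.obj k.unop ⟶ (slice (O.obj (SimplexCategory.mk m))).obj (Under.mk x)) :
    (nerveSliceEquiv hI slice adj O jiso hj₁ x k f).1.2 =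
      (jiso m k.unop.len).inv ≫ (homSliceEquiv hI slice adj x _ f).1 :=
  rfl

theorem nerveSliceEquiv_naturality
    (hj₁ : ∀ m n : ℕ, iota1 hI (O.obj (SimplexCategory.mk m)) (O.obj (SimplexCategory.mk n))
        ≫ (jiso m n).hom
      = O.map (incl₁ (SimplexCategory.mk m) (SimplexCategory.mk n)))
    (hj₂ : ∀ (m n n' : ℕ) (f : SimplexCategory.mk n ⟶ SimplexCategory.mk n'),
      (O.obj (SimplexCategory.mk m) ◁ O.map f) ≫ (jiso m n').hom
        = (jiso m n).hom ≫ O.map (joinHom (𝟙 (SimplexCategory.mk m)) f))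
    {X : C} {m : ℕ} (x : O.obj (SimplexCategory.mk m) ⟶ X) {k k' : SimplexCategoryᵒᵖ}
    (ψ : k ⟶ k') (f : O.obj k.unop ⟶ (slice (O.obj (SimplexCategory.mk m))).obj (Under.mk x)) :
    nerveSliceEquiv hI slice adj O jiso hj₁ x k' (O.map ψ.unop ≫ f) =
      (Coslice (𝟙 ((cnerve O).obj X))
        (show ((cnerve O).obj X).obj (op (SimplexCategory.mk m)) from x)).map ψ
        (nerveSliceEquiv hI slice adj O jiso hj₁ x k f) := by
  apply Coslice.ext_snd
  rw [nerveSliceEquiv_snd, homSliceEquiv_comp]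
  change _ = O.map (joinHom (𝟙 _) ψ.unop) ≫
    (nerveSliceEquiv hI slice adj O jiso hj₁ x k f).1.2
  rw [nerveSliceEquiv_snd,
    ← (CommSq.mk (hj₂ m k'.unop.len k.unop.len ψ.unop)).vert_inv.w_assoc]

def nerveSliceIso
    (hj₁ : ∀ m n : ℕ, iota1 hI (O.obj (SimplexCategory.mk m)) (O.obj (SimplexCategory.mk n))
        ≫ (jiso m n).hom
      = O.map (incl₁ (SimplexCategory.mk m) (SimplexCategory.mk n)))
    (hj₂ : ∀ (m n n' : ℕ) (f : SimplexCategory.mk n ⟶ SimplexCategory.mk n'),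
      (O.obj (SimplexCategory.mk m) ◁ O.map f) ≫ (jiso m n').hom
        = (jiso m n).hom ≫ O.map (joinHom (𝟙 (SimplexCategory.mk m)) f))
    {X : C} {m : ℕ} (x : O.obj (SimplexCategory.mk m) ⟶ X) :
    (cnerve O).obj ((slice (O.obj (SimplexCategory.mk m))).obj (Under.mk x)) ≅
      Coslice (𝟙 ((cnerve O).obj X))
        (show ((cnerve O).obj X).obj (op (SimplexCategory.mk m)) from x) :=
  NatIso.ofComponents (fun k => (nerveSliceEquiv hI slice adj O jiso hj₁ x k).toIso)
    fun ψ => by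
      ext f
      exact nerveSliceEquiv_naturality hI slice adj O jiso hj₁ hj₂ x ψ f

theorem nerveSliceIso_naturality
    (hj₁ : ∀ m n : ℕ, iota1 hI (O.obj (SimplexCategory.mk m)) (O.obj (SimplexCategory.mk n))
        ≫ (jiso m n).hom
      = O.map (incl₁ (SimplexCategory.mk m) (SimplexCategory.mk n)))
    (hj₂ : ∀ (m n n' : ℕ) (f : SimplexCategory.mk n ⟶ SimplexCategory.mk n'),
      (O.obj (SimplexCategory.mk m) ◁ O.map f) ≫ (jiso m n').hom
        = (jiso m n).hom ≫ O.map (joinHom (𝟙 (SimplexCategory.mk m)) f))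
    (hj₃ : ∀ (m m' n : ℕ) (φ : SimplexCategory.mk m' ⟶ SimplexCategory.mk m),
      (O.map φ ▷ O.obj (SimplexCategory.mk n)) ≫ (jiso m n).hom
        = (jiso m' n).hom ≫ O.map (joinHom φ (𝟙 (SimplexCategory.mk n))))
    {X : C} {m m' : ℕ} (φ : SimplexCategory.mk m' ⟶ SimplexCategory.mk m)
    (x : O.obj (SimplexCategory.mk m) ⟶ X) :
    (cnerve O).map (sliceMapC hI slice adj O φ x) ≫
        (nerveSliceIso hI slice adj O jiso hj₁ hj₂ (O.map φ ≫ x)).hom =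
      (nerveSliceIso hI slice adj O jiso hj₁ hj₂ x).hom ≫
        cosliceRestrict (𝟙 ((cnerve O).obj X)) φ x := by
  ext k (f : O.obj k.unop ⟶ _)
  apply Coslice.ext_snd
  change (jiso m' k.unop.len).inv ≫
      (homSliceEquiv hI slice adj (O.map φ ≫ x) _ (f ≫ sliceMapC hI slice adj O φ x)).1 =
    O.map (joinHom φ (𝟙 k.unop)) ≫ (jiso m k.unop.len).inv ≫
      (homSliceEquiv hI slice adj x _ f).1
  rw [homSliceEquiv_comp_sliceMapC, ← (CommSq.mk (hj₃ m m' k.unop.len φ)).vert_inv.w_assoc]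

end JoinCompatible

theorem nerve_slice_iso
    (jiso : ∀ m n : ℕ, O.obj (SimplexCategory.mk m) ⊗ O.obj (SimplexCategory.mk n)
      ≅ O.obj (joinObj (SimplexCategory.mk m) (SimplexCategory.mk n)))
    (hj₁ : ∀ m n : ℕ, iota1 hI (O.obj (SimplexCategory.mk m)) (O.obj (SimplexCategory.mk n))
        ≫ (jiso m n).hom
      = O.map (incl₁ (SimplexCategory.mk m) (SimplexCategory.mk n)))
    (hj₂ : ∀ (m n n' : ℕ) (f : SimplexCategory.mk n ⟶ SimplexCategory.mk n'),
      (O.obj (SimplexCategory.mk m) ◁ O.map f) ≫ (jiso m n').hom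
        = (jiso m n).hom ≫ O.map (joinHom (𝟙 (SimplexCategory.mk m)) f))
    (hj₃ : ∀ (m m' n : ℕ) (φ : SimplexCategory.mk m' ⟶ SimplexCategory.mk m),
      (O.map φ ▷ O.obj (SimplexCategory.mk n)) ≫ (jiso m n).hom
        = (jiso m' n).hom ≫ O.map (joinHom φ (𝟙 (SimplexCategory.mk n))))
    (X : C) :
    ∃ iso : ∀ (m : ℕ) (x : ((cnerve O).obj X).obj (op (SimplexCategory.mk m))),
      (cnerve O).obj ((slice (O.obj (SimplexCategory.mk m))).obj
          (Under.mk (show O.obj (SimplexCategory.mk m) ⟶ X from x)))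
        ≅ Coslice (𝟙 ((cnerve O).obj X)) x,
      ∀ (m m' : ℕ) (φ : SimplexCategory.mk m' ⟶ SimplexCategory.mk m)
        (x : ((cnerve O).obj X).obj (op (SimplexCategory.mk m))),
        (cnerve O).map (sliceMapC hI slice adj O φ
            (show O.obj (SimplexCategory.mk m) ⟶ X from x))
          ≫ (iso m' (((cnerve O).obj X).map φ.op x)).hom
        = (iso m x).hom ≫ cosliceRestrict (𝟙 ((cnerve O).obj X)) φ x :=
  ⟨fun _ x => nerveSliceIso hI slice adj O jiso hj₁ hj₂ x,
    fun _ _ φ x => nerveSliceIso_naturality hI slice adj O jiso hj₁ hj₂ hj₃ φ x⟩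

end

end Monoidal

end ThmA
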